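/- The minimum of ‖Xb‖₂² over {b : ‖b_S‖₁ − ‖b_{−S}‖₁ = 1} equals the minimum of ‖Xb‖₂² over {b : ‖b_S‖₁ − ‖b_{−S}‖₁ ≥ 1}, and both equal the minimum over all sign vectors z_S ∈ {±1}^{|S|} of the convex problems min{ ‖Xb‖₂² : z_S^T b_S − ‖b_{−S}‖₁ ≥ 1, z_j b_j ≥ 0 for all j ∈ S }. -/

import Mathlib

/-!
Both identities rest on the homogeneity of the constraint and of the objective. If
`‖b_S‖₁ - ‖b_{-S}‖₁ = t ≥ 1`, then `b / t` satisfies the equality constraint and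
`‖X (b / t)‖² = ‖X b‖² / t² ≤ ‖X b‖²`, so the two infima agree. For the sign vectors,
`z_S^T b_S ≤ ‖b_S‖₁` whenever `z_S ∈ {±1}^S`, with equality for `z_j = sign b_j`, which also
makes every `z_j b_j` nonnegative; hence the union over `z_S` of the convex feasible sets is
exactly the set `‖b_S‖₁ - ‖b_{-S}‖₁ ≥ 1`.
-/

open Finset

noncomputable def l1 {p : ℕ} (b : Fin p → ℝ) : ℝ := ∑ j, |b j|

def restr {p : ℕ} (S : Finset (Fin p)) (b : Fin p → ℝ) : Fin p → ℝ :=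
  fun j => if j ∈ S then b j else 0

noncomputable def qf {n p : ℕ} (X : Matrix (Fin n) (Fin p) ℝ) (b : Fin p → ℝ) : ℝ :=
  ∑ i, (X.mulVec b i) ^ 2

/-- The compatibility constant κ̂(v,S) (square root of the minimal value). -/
noncomputable def kappaHat {n p : ℕ} (X : Matrix (Fin n) (Fin p) ℝ) (S : Finset (Fin p))
    (v : ℝ) : ℝ :=
  Real.sqrt (sInf {c : ℝ | ∃ b : Fin p → ℝ,
    l1 (restr S b) - v * l1 (restr Sᶜ b) = 1 ∧ c = (S.card : ℝ) * qf X b / n})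

lemma mul_le_abs_of_eq_one_or_eq_neg_one {s : ℝ} (hs : s = 1 ∨ s = -1) (x : ℝ) :
    s * x ≤ |x| := by
  rcases hs with rfl | rfl
  · simpa using le_abs_self x
  · simpa using neg_le_abs x

lemma exists_eq_one_or_eq_neg_one_mul_eq_abs (x : ℝ) :
    ∃ s : ℝ, (s = 1 ∨ s = -1) ∧ s * x = |x| := by
  rcases le_or_gt 0 x with hx | hx
  · exact ⟨1, .inl rfl, by rw [one_mul, abs_of_nonneg hx]⟩
  · exact ⟨-1, .inr rfl, by rw [neg_one_mul, abs_of_neg hx]⟩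

section

variable {p : ℕ}

lemma l1_restr (S : Finset (Fin p)) (b : Fin p → ℝ) : l1 (restr S b) = ∑ j ∈ S, |b j| := by
  simp [l1, restr, apply_ite abs, Finset.sum_ite_mem]

lemma l1_restr_smul (S : Finset (Fin p)) (b : Fin p → ℝ) {t : ℝ} (ht : 0 ≤ t) :
    l1 (restr S (t • b)) = t * l1 (restr S b) := by
  simp only [l1_restr, Finset.mul_sum, Pi.smul_apply, smul_eq_mul, abs_mul, abs_of_nonneg ht]

lemma qf_nonneg {n : ℕ} (X : Matrix (Fin n) (Fin p) ℝ) (b : Fin p → ℝ) : 0 ≤ qf X b :=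
  Finset.sum_nonneg fun _ _ => sq_nonneg _

lemma qf_smul {n : ℕ} (X : Matrix (Fin n) (Fin p) ℝ) (b : Fin p → ℝ) (t : ℝ) :
    qf X (t • b) = t ^ 2 * qf X b := by
  simp only [qf, Matrix.mulVec_smul, Pi.smul_apply, smul_eq_mul, mul_pow, Finset.mul_sum]

lemma exists_l1_restr_sub_eq_one_qf_le {n : ℕ} (X : Matrix (Fin n) (Fin p) ℝ)
    (S : Finset (Fin p)) {b : Fin p → ℝ} (hb : l1 (restr S b) - l1 (restr Sᶜ b) ≥ 1) :
    ∃ b' : Fin p → ℝ, l1 (restr S b') - l1 (restr Sᶜ b') = 1 ∧ qf X b' ≤ qf X b := by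
  set t := l1 (restr S b) - l1 (restr Sᶜ b) with ht
  have ht0 : 0 < t := one_pos.trans_le hb
  refine ⟨t⁻¹ • b, ?_, ?_⟩
  · rw [l1_restr_smul _ _ (inv_nonneg.2 ht0.le), l1_restr_smul _ _ (inv_nonneg.2 ht0.le),
      ← mul_sub, ← ht, inv_mul_cancel₀ ht0.ne']
  · have hinv : t⁻¹ ^ 2 ≤ 1 := pow_le_one₀ (inv_nonneg.2 ht0.le) (inv_le_one_of_one_le₀ hb)
    rw [qf_smul]
    exact mul_le_of_le_one_left (qf_nonneg X b) hinv

lemma l1_restr_sub_ge_one_iff_exists_sign (S : Finset (Fin p)) (b : Fin p → ℝ) :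
    l1 (restr S b) - l1 (restr Sᶜ b) ≥ 1 ↔
      ∃ z : Fin p → ℝ, (∀ j ∈ S, z j = 1 ∨ z j = -1) ∧
        (∑ j ∈ S, z j * b j) - l1 (restr Sᶜ b) ≥ 1 ∧ (∀ j ∈ S, 0 ≤ z j * b j) := by
  rw [l1_restr S]
  constructor
  · intro hb
    choose z hz hzb using fun j => exists_eq_one_or_eq_neg_one_mul_eq_abs (b j)
    exact ⟨z, fun j _ => hz j, by simpa only [hzb] using hb, fun j _ => hzb j ▸ abs_nonneg _⟩
  · rintro ⟨z, hz, hzb, -⟩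
    have : ∑ j ∈ S, z j * b j ≤ ∑ j ∈ S, |b j| :=
      Finset.sum_le_sum fun j hj => mul_le_abs_of_eq_one_or_eq_neg_one (hz j hj) (b j)
    linarith

end

theorem stmt3 {n p : ℕ} (X : Matrix (Fin n) (Fin p) ℝ) (S : Finset (Fin p)) :
    sInf {c : ℝ | ∃ b : Fin p → ℝ,
        l1 (restr S b) - l1 (restr Sᶜ b) = 1 ∧ c = qf X b} =
    sInf {c : ℝ | ∃ b : Fin p → ℝ,
        l1 (restr S b) - l1 (restr Sᶜ b) ≥ 1 ∧ c = qf X b} ∧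
    sInf {c : ℝ | ∃ b : Fin p → ℝ,
        l1 (restr S b) - l1 (restr Sᶜ b) ≥ 1 ∧ c = qf X b} =
    sInf {c : ℝ | ∃ z b : Fin p → ℝ,
        (∀ j ∈ S, z j = 1 ∨ z j = -1) ∧
        (∑ j ∈ S, z j * b j) - l1 (restr Sᶜ b) ≥ 1 ∧
        (∀ j ∈ S, 0 ≤ z j * b j) ∧ c = qf X b} := by
  constructor
  · refine csInf_eq_csInf_of_forall_exists_le ?_ ?_
    · rintro c ⟨b, hb, rfl⟩
      exact ⟨qf X b, ⟨b, hb.ge, rfl⟩, le_rfl⟩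
    · rintro c ⟨b, hb, rfl⟩
      obtain ⟨b', hb', hle⟩ := exists_l1_restr_sub_eq_one_qf_le X S hb
      exact ⟨qf X b', ⟨b', hb', rfl⟩, hle⟩
  · congr 1
    ext c
    constructor
    · rintro ⟨b, hb, hc⟩
      obtain ⟨z, hz, hzb, hpos⟩ := (l1_restr_sub_ge_one_iff_exists_sign S b).1 hb
      exact ⟨z, b, hz, hzb, hpos, hc⟩
    · rintro ⟨z, b, hz, hzb, hpos, hc⟩
      exact ⟨b, (l1_restr_sub_ge_one_iff_exists_sign S b).2 ⟨z, hz, hzb, hpos⟩, hc⟩
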